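/- arXiv:1308.5490 — 3 statements merged into one kernel-verified Lean document; each statement's English description precedes it below -/
import Mathlib

section
/- The partition of the vertex set of the arrangement graph A(n,k) into cells according to cycle type (two k-permutations lie in the same cell if and only if they have the same cycle type) is an equitable partition: for any two cells X, Y, every vertex in X has the same number of neighbors in Y. -/
attribute [local instance] Classical.propDecidable

def arrangementGraph (n k : ℕ) :
    SimpleGraph {π : Fin k → Fin n // Function.Injective π} where
  Adj π ρ := ∃! i, π.1 i ≠ ρ.1 i
  symm := by
    refine ⟨?_⟩
    rintro π ρ ⟨i, hi, hu⟩
    exact ⟨i, hi.symm, fun j hj => hu j hj.symm⟩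
  loopless := by refine ⟨?_⟩; rintro π ⟨i, hi, -⟩; exact hi rfl

/-- Extend a `k`-permutation `π : [k] → [n]` to a map `ℕ → ℕ` fixing everything
outside `{0,…,k-1}`, so that its dynamics encode the cycles and paths of `π`. -/
def extFun {n k : ℕ} (π : Fin k → Fin n) : ℕ → ℕ :=
  fun u => if h : u < k then (π ⟨u, h⟩ : ℕ) else u

/-- The number of elements of `[k]` lying on a cycle of length `i` of `π`. -/
noncomputable def cyclicCount {n k : ℕ} (π : Fin k → Fin n) (i : ℕ) : ℕ :=
  Nat.card {u : ℕ // u < k ∧ Function.minimalPeriod (extFun π) u = i}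

/-- The number of paths of length `i` in the cyclic decomposition of `π`. -/
noncomputable def pathCount {n k : ℕ} (π : Fin k → Fin n) (i : ℕ) : ℕ :=
  Nat.card {u : ℕ // u < k ∧ (∀ w, w < k → extFun π w ≠ u) ∧
    sInf {ℓ : ℕ | k ≤ (extFun π)^[ℓ] u} = i}

/-- Two `k`-permutations have the same cycle type iff for every `i` they have the same
number of cycles of length `i` and the same number of paths of length `i`. -/
def SameCycleType {n k : ℕ} (π ρ : Fin k → Fin n) : Prop :=
  ∀ i, cyclicCount π i = cyclicCount ρ i ∧ pathCount π i = pathCount ρ i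


/-!
Two `k`-permutations `π`, `ρ` of the same cycle type are conjugate: some permutation `σ` of `[n]`
preserving `[k]` satisfies `σ ∘ π = ρ ∘ σ` on `[k]`. To build `σ`, let `π` act on `[n]` (as the
identity outside `[k]`); then `[n]` splits into the cycles of `π`, the maximal paths of `π`, which
end outside `[k]`, and the isolated points of `[n] \ [k]`. Equal cycle types give length-preserving
bijections between the cycles and between the paths of `π` and `ρ`; the isolated points are then
equinumerous as well, since everything adds up to `n`. Relabelling positions and values by `σ` is
an automorphism of `A(n,k)` that preserves cycle types and maps `π` to `ρ`, so it carries the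
neighbours of `π` in any cell bijectively onto the neighbours of `ρ` in that cell.
-/

open Function Equiv

theorem card_eq_of_card_sum_eq {α β α' β' : Type*} [Finite (α ⊕ β)] [Finite (α' ⊕ β')]
    (e : α ≃ α') (h : Nat.card (α ⊕ β) = Nat.card (α' ⊕ β')) : Nat.card β = Nat.card β' := by
  have := Finite.of_injective _ (Sum.inl_injective (α := α) (β := β))
  have := Finite.of_injective _ (Sum.inr_injective (α := α) (β := β))
  have := Finite.of_injective _ (Sum.inr_injective (α := α') (β := β'))
  have := Finite.of_equiv α e
  rw [Nat.card_sum, Nat.card_sum, Nat.card_congr e] at h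
  omega

theorem minimalPeriod_eq_of_semiconj {α β : Type*} {fa : α → α} {fb : β → β} (σ : α ≃ β)
    (h : Semiconj σ fa fb) (x : α) : minimalPeriod fb (σ x) = minimalPeriod fa x :=
  minimalPeriod_eq_minimalPeriod_iff.2 fun m => by
    simp only [IsPeriodicPt, IsFixedPt, ← h.iterate_right m x, σ.injective.eq_iff]

theorem SameCycleType.symm {k n : ℕ} {π ρ : Fin k → Fin n} (h : SameCycleType π ρ) :
    SameCycleType ρ π :=
  fun i => ⟨(h i).1.symm, (h i).2.symm⟩

theorem SameCycleType.trans {k n : ℕ} {π ρ τ : Fin k → Fin n} (h : SameCycleType π ρ)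
    (h' : SameCycleType ρ τ) : SameCycleType π τ :=
  fun i => ⟨(h i).1.trans (h' i).1, (h i).2.trans (h' i).2⟩

namespace KPerm

/-- Positions in a disjoint union of cycles, indexed by `C i` for the cycles of length `i`, and of
paths, indexed by `S i` for the paths with `i` edges. -/
def Addr (C S : ℕ → Type) : Type := (Σ i, C i × Fin i) ⊕ Σ i, S i × Fin (i + 1)

namespace Addr

variable {C S C' S' : ℕ → Type}

def next : Addr C S → Addr C S
  | .inl ⟨i, c, d⟩ => .inl ⟨i, c, ⟨(d + 1) % i, Nat.mod_lt _ d.pos⟩⟩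
  | .inr ⟨i, s, d⟩ => .inr ⟨i, s, ⟨min (d + 1) i, by omega⟩⟩

def IsInner : Addr C S → Prop
  | .inl _ => True
  | .inr ⟨i, _, d⟩ => d < i

def congr (eC : ∀ i, C i ≃ C' i) (eS : ∀ i, S i ≃ S' i) : Addr C S ≃ Addr C' S' :=
  sumCongr (sigmaCongrRight fun i => (eC i).prodCongr (Equiv.refl _))
    (sigmaCongrRight fun i => (eS i).prodCongr (Equiv.refl _))

theorem congr_next (eC : ∀ i, C i ≃ C' i) (eS : ∀ i, S i ≃ S' i) (a : Addr C S) :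
    congr eC eS a.next = (congr eC eS a).next := by
  rcases a with ⟨i, c, d⟩ | ⟨i, s, d⟩ <;> rfl

theorem isInner_congr (eC : ∀ i, C i ≃ C' i) (eS : ∀ i, S i ≃ S' i) (a : Addr C S) :
    (congr eC eS a).IsInner ↔ a.IsInner := by
  rcases a with ⟨i, c, d⟩ | ⟨i, s, d⟩ <;> rfl

def equivSumZero (C S : ℕ → Type) :
    Addr C S ≃ ((Σ i, C i × Fin i) ⊕ Σ i, S (i + 1) × Fin (i + 1 + 1)) ⊕ S 0 :=
  ((sumCongr (Equiv.refl _) ((sigmaNatSucc _).trans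
    ((prodUnique (S 0) (Fin 1)).sumCongr (Equiv.refl _)))).trans
    (sumCongr (Equiv.refl _) (sumComm _ _))).trans (sumAssoc _ _ _).symm

theorem card_zero_eq [Finite (Addr C S)] [Finite (Addr C' S')] (eC : ∀ i, C i ≃ C' i)
    (eS : ∀ i, S (i + 1) ≃ S' (i + 1)) (h : Nat.card (Addr C S) = Nat.card (Addr C' S')) :
    Nat.card (S 0) = Nat.card (S' 0) := by
  have := Finite.of_equiv _ (equivSumZero C S)
  have := Finite.of_equiv _ (equivSumZero C' S')
  refine card_eq_of_card_sum_eq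
    (sumCongr (sigmaCongrRight fun i => (eC i).prodCongr (Equiv.refl (Fin i)))
      (sigmaCongrRight fun i => (eS i).prodCongr (Equiv.refl (Fin (i + 1 + 1))))) ?_
  rwa [← Nat.card_congr (equivSumZero C S), ← Nat.card_congr (equivSumZero C' S')]

end Addr

/-- `f` behaves like `extFun π` for an injective `π : Fin k → Fin n`. -/
structure IsExt (k n : ℕ) (f : ℕ → ℕ) : Prop where
  le : k ≤ n
  eq_self : ∀ u, k ≤ u → f u = u
  lt : ∀ u, u < k → f u < n
  injOn : Set.InjOn f (Set.Iio k)

theorem isExt_extFun {k n : ℕ} {π : Fin k → Fin n} (hπ : Injective π) :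
    IsExt k n (extFun π) where
  le := Fin.le_of_injective π hπ
  eq_self u hu := dif_neg (not_lt.2 hu)
  lt u hu := by simp only [extFun, dif_pos hu, Fin.is_lt]
  injOn u hu v hv h := by
    simp only [extFun, dif_pos (Set.mem_Iio.1 hu), dif_pos (Set.mem_Iio.1 hv)] at h
    exact congrArg Fin.val (hπ (Fin.ext h))

theorem extFun_injective {k n : ℕ} : Injective (extFun : (Fin k → Fin n) → ℕ → ℕ) := by
  intro π ρ h
  funext i
  exact Fin.ext (by simpa [extFun] using congrFun h i)

/-- Junk value `0` when the orbit of `u` never leaves `[k]`. -/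
noncomputable def exitTime (k : ℕ) (f : ℕ → ℕ) (u : ℕ) : ℕ := sInf {ℓ | k ≤ f^[ℓ] u}

def IsCyclic (k : ℕ) (f : ℕ → ℕ) (u : ℕ) : Prop := u < k ∧ u ∈ periodicPts f

/-- A source starts a path, which leaves `[k]` after `exitTime` steps; the sources outside `[k]`
are the isolated points, viewed as paths without edges. -/
def IsSource (k n : ℕ) (f : ℕ → ℕ) (s : ℕ) : Prop := s < n ∧ ∀ w, w < k → f w ≠ s

def IsCycleRep (k : ℕ) (f : ℕ → ℕ) (r : ℕ) : Prop := IsCyclic k f r ∧ ∀ j, r ≤ f^[j] r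

section Dynamics

variable {k n : ℕ} {f : ℕ → ℕ}

theorem iterate_lt_of_lt_exitTime {u d : ℕ} (hd : d < exitTime k f u) : f^[d] u < k :=
  not_le.1 fun h => Nat.notMem_of_lt_sInf hd h

theorem exitTime_le_of_le {u ℓ : ℕ} (h : k ≤ f^[ℓ] u) : exitTime k f u ≤ ℓ :=
  Nat.sInf_le (show ℓ ∈ {ℓ | k ≤ f^[ℓ] u} from h)

theorem exitTime_eq_zero {u : ℕ} (hu : k ≤ u) : exitTime k f u = 0 :=
  Nat.sInf_eq_zero.2 (Or.inl hu)

theorem exists_lt_minimalPeriod_iterate_eq {x : ℕ} (hx : x ∈ periodicPts f) (a : ℕ) :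
    ∃ d < minimalPeriod f x, f^[d] (f^[a] x) = x := by
  set p := minimalPeriod f x
  have hp : 0 < p := minimalPeriod_pos_of_mem_periodicPts hx
  have hmod := iterate_mod_minimalPeriod_eq (f := f) (x := f^[a] x) (n := p * a - a)
  rw [minimalPeriod_apply_iterate hx, ← iterate_add_apply f (p * a - a) a,
    Nat.sub_add_cancel (Nat.le_mul_of_pos_left a hp)] at hmod
  exact ⟨(p * a - a) % p, Nat.mod_lt _ hp,
    hmod.trans ((isPeriodicPt_minimalPeriod f x).mul_const a).eq⟩

theorem IsCycleRep.eq_of_iterate_eq {r r' d d' : ℕ} (hr : IsCycleRep k f r)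
    (hr' : IsCycleRep k f r') (hd : d < minimalPeriod f r) (hd' : d' < minimalPeriod f r')
    (h : f^[d] r = f^[d'] r') : r = r' ∧ d = d' := by
  obtain ⟨e, -, he⟩ := exists_lt_minimalPeriod_iterate_eq hr.1.2 d
  obtain ⟨e', -, he'⟩ := exists_lt_minimalPeriod_iterate_eq hr'.1.2 d'
  -- each representative lies in the orbit of the other, and both are minimal there
  have hrr' : r = r' := le_antisymm
    (by rw [← he', ← h, ← iterate_add_apply]; exact hr.2 _)
    (by rw [← he, h, ← iterate_add_apply]; exact hr'.2 _)
  subst hrr'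
  exact ⟨rfl, iterate_injOn_Iio_minimalPeriod hd hd' h⟩

namespace IsExt

theorem iterate_lt (hf : IsExt k n f) {u : ℕ} (hu : u < n) (d : ℕ) : f^[d] u < n := by
  induction d with
  | zero => exact hu
  | succ d ih =>
    rw [iterate_succ_apply']
    by_cases h : f^[d] u < k
    · exact hf.lt _ h
    · rwa [hf.eq_self _ (not_lt.1 h)]

theorem eq_of_iterate_eq (hf : IsExt k n f) {a x y : ℕ} (hx : ∀ c < a, f^[c] x < k)
    (hy : ∀ c < a, f^[c] y < k) (h : f^[a] x = f^[a] y) : x = y := by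
  induction a with
  | zero => exact h
  | succ a ih =>
    rw [iterate_succ_apply', iterate_succ_apply'] at h
    exact ih (fun c hc => hx c (by omega)) (fun c hc => hy c (by omega))
      (hf.injOn (hx a a.lt_succ_self) (hy a a.lt_succ_self) h)

theorem isCyclic_iterate (hf : IsExt k n f) {u : ℕ} (hu : IsCyclic k f u) (j : ℕ) :
    IsCyclic k f (f^[j] u) := by
  refine ⟨not_le.1 fun hj => ?_, ?_⟩
  · -- once the orbit leaves `[k]` it is frozen, so it could never return to `u`
    set p := minimalPeriod f u
    have hp : 0 < p := minimalPeriod_pos_of_mem_periodicPts hu.2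
    have hfrozen : f^[p * (j + 1) - j] (f^[j] u) = f^[j] u := iterate_fixed (hf.eq_self _ hj) _
    rw [← iterate_add_apply, Nat.sub_add_cancel (by nlinarith),
      ((isPeriodicPt_minimalPeriod f u).mul_const _).eq] at hfrozen
    exact absurd hu.1 (by omega)
  · obtain ⟨m, hm, hmu⟩ := hu.2
    exact ⟨m, hm, hmu.apply_iterate j⟩

theorem exists_le_iterate (hf : IsExt k n f) {u : ℕ} (hu : ¬IsCyclic k f u) :
    ∃ ℓ ≤ k, k ≤ f^[ℓ] u := by
  by_contra! h
  obtain ⟨a, b, hab, heq⟩ := Fintype.exists_ne_map_eq_of_card_lt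
    (fun ℓ : Fin (k + 1) => (⟨f^[ℓ] u, h ℓ (by omega)⟩ : Fin k)) (by simp)
  wlog hlt : a < b generalizing a b
  · exact this b a hab.symm heq.symm (lt_of_le_of_ne (not_lt.1 hlt) (Ne.symm hab))
  have hba : u = f^[b - a] u :=
    hf.eq_of_iterate_eq (a := a) (fun c hc => h c (by omega))
      (fun c hc => by rw [← iterate_add_apply]; exact h _ (by omega))
      (by rw [← iterate_add_apply, Nat.add_sub_cancel' hlt.le]; exact congrArg Fin.val heq)
  exact hu ⟨h 0 (Nat.zero_le _), b - a, by omega, hba.symm⟩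

theorem le_iterate_exitTime (hf : IsExt k n f) {u : ℕ} (hu : ¬IsCyclic k f u) :
    k ≤ f^[exitTime k f u] u :=
  Nat.sInf_mem (s := {ℓ | k ≤ f^[ℓ] u}) ((hf.exists_le_iterate hu).imp fun _ h => h.2)

theorem exitTime_le (hf : IsExt k n f) {u : ℕ} (hu : ¬IsCyclic k f u) : exitTime k f u ≤ k :=
  let ⟨_, hℓ, h⟩ := hf.exists_le_iterate hu
  (exitTime_le_of_le h).trans hℓ

theorem exitTime_apply (hf : IsExt k n f) {w : ℕ} (hw : w < k) (hc : ¬IsCyclic k f (f w)) :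
    exitTime k f w = exitTime k f (f w) + 1 := by
  refine le_antisymm (exitTime_le_of_le (hf.le_iterate_exitTime hc)) ?_
  have hexit := hf.le_iterate_exitTime fun h => hc (hf.isCyclic_iterate h 1)
  obtain ⟨m, hm⟩ := Nat.exists_eq_succ_of_ne_zero (n := exitTime k f w) fun h0 => by
    rw [h0] at hexit
    exact absurd hw (not_lt.2 hexit)
  rw [hm] at hexit ⊢
  exact Nat.succ_le_succ (exitTime_le_of_le hexit)

theorem not_isCyclic_of_isSource (hf : IsExt k n f) {s : ℕ} (hs : IsSource k n f s) :
    ¬IsCyclic k f s := fun hc => by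
  have hp := minimalPeriod_pos_of_mem_periodicPts hc.2
  refine hs.2 _ (hf.isCyclic_iterate hc (minimalPeriod f s - 1)).1 ?_
  rw [← iterate_succ_apply' f, Nat.succ_eq_add_one, Nat.sub_add_cancel hp, iterate_minimalPeriod]

theorem not_isCyclic_iterate_of_isSource (hf : IsExt k n f) {s d : ℕ} (hs : IsSource k n f s)
    (hd : d ≤ exitTime k f s) : ¬IsCyclic k f (f^[d] s) := fun hc => by
  have hlt := (hf.isCyclic_iterate hc (exitTime k f s - d)).1
  rw [← iterate_add_apply, Nat.sub_add_cancel hd] at hlt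
  exact absurd (hf.le_iterate_exitTime (hf.not_isCyclic_of_isSource hs)) (not_le.2 hlt)

theorem exists_isSource_iterate_eq (hf : IsExt k n f) {u : ℕ} (hu : u < n)
    (hc : ¬IsCyclic k f u) :
    ∃ s, IsSource k n f s ∧ ∃ d, f^[d] s = u ∧ exitTime k f s = d + exitTime k f u := by
  by_cases hsrc : IsSource k n f u
  · exact ⟨u, hsrc, 0, rfl, by simp⟩
  obtain ⟨w, hw, hwu⟩ : ∃ w, w < k ∧ f w = u := by simpa [IsSource, hu] using hsrc
  have hwc : ¬IsCyclic k f w := fun h => hc (hwu ▸ hf.isCyclic_iterate h 1)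
  have hexit : exitTime k f w = exitTime k f u + 1 := hwu ▸ hf.exitTime_apply hw (hwu ▸ hc)
  have hexit_le := hf.exitTime_le hwc
  obtain ⟨s, hs, d, hsw, hd⟩ := hf.exists_isSource_iterate_eq (hw.trans_le hf.le) hwc
  exact ⟨s, hs, d + 1, by rw [iterate_succ_apply', hsw, hwu], by omega⟩
termination_by k - exitTime k f u
decreasing_by omega

theorem eq_of_iterate_eq_of_isSource (hf : IsExt k n f) {s s' d d' : ℕ}
    (hs : IsSource k n f s) (hs' : IsSource k n f s') (hd : d ≤ exitTime k f s)
    (hd' : d' ≤ exitTime k f s') (h : f^[d] s = f^[d'] s') : s = s' ∧ d = d' := by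
  wlog hle : d ≤ d' generalizing s s' d d'
  · exact (this hs' hs hd' hd h.symm (by omega)).imp Eq.symm Eq.symm
  have hss' : s = f^[d' - d] s' :=
    hf.eq_of_iterate_eq (a := d) (fun c hc => iterate_lt_of_lt_exitTime (by omega))
      (fun c hc => by rw [← iterate_add_apply]; exact iterate_lt_of_lt_exitTime (by omega))
      (by rwa [← iterate_add_apply, Nat.add_sub_cancel' hle])
  obtain hdd | hdd := Nat.eq_zero_or_pos (d' - d)
  · exact ⟨by rwa [hdd] at hss', by omega⟩
  · -- otherwise `s` would be the image of the point of the path through `s'` just before it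
    refine absurd hss' fun heq => hs.2 (f^[d' - d - 1] s')
      (iterate_lt_of_lt_exitTime (by omega)) ?_
    rw [heq, ← iterate_succ_apply' f, Nat.succ_eq_add_one, Nat.sub_add_cancel hdd]

theorem exists_isCycleRep_iterate_eq (hf : IsExt k n f) {u : ℕ} (hu : IsCyclic k f u) :
    ∃ r, IsCycleRep k f r ∧ minimalPeriod f r = minimalPeriod f u ∧
      ∃ d < minimalPeriod f u, f^[d] r = u := by
  obtain ⟨a, ha : f^[a] u = _⟩ := Nat.sInf_mem (Set.range_nonempty fun j => f^[j] u)
  set r := sInf (Set.range fun j => f^[j] u)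
  have hmin : ∀ j, r ≤ f^[j] r := fun j =>
    (Nat.sInf_le ⟨j + a, rfl⟩ : r ≤ _).trans_eq (by rw [← ha, ← iterate_add_apply])
  refine ⟨r, ⟨ha ▸ hf.isCyclic_iterate hu a, hmin⟩, ha ▸ minimalPeriod_apply_iterate hu.2 a, ?_⟩
  rw [← ha]
  exact exists_lt_minimalPeriod_iterate_eq hu.2 a

end IsExt

abbrev CycleReps (k : ℕ) (f : ℕ → ℕ) (i : ℕ) : Type :=
  {r // IsCycleRep k f r ∧ minimalPeriod f r = i}

abbrev Sources (k n : ℕ) (f : ℕ → ℕ) (i : ℕ) : Type :=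
  {s // IsSource k n f s ∧ exitTime k f s = i}

instance : Finite (CycleReps k f i) :=
  Finite.of_injective (fun r => (⟨r.1, r.2.1.1.1⟩ : Fin k)) fun _ _ h => Subtype.ext (Fin.mk.inj h)

instance : Finite (Sources k n f i) :=
  Finite.of_injective (fun s => (⟨s.1, s.2.1.1⟩ : Fin n)) fun _ _ h => Subtype.ext (Fin.mk.inj h)

abbrev Address (k n : ℕ) (f : ℕ → ℕ) : Type := Addr (CycleReps k f) (Sources k n f)

def decode : Address k n f → ℕ
  | .inl ⟨_, r, d⟩ => f^[d] r.1
  | .inr ⟨_, s, d⟩ => f^[d] s.1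

namespace IsExt

theorem decode_lt (hf : IsExt k n f) : ∀ a : Address k n f, decode a < n
  | .inl ⟨_, r, d⟩ => (hf.isCyclic_iterate r.2.1.1 d).1.trans_le hf.le
  | .inr ⟨_, s, d⟩ => hf.iterate_lt s.2.1.1 d

theorem decode_lt_iff (hf : IsExt k n f) : ∀ a : Address k n f, decode a < k ↔ a.IsInner
  | .inl ⟨_, r, d⟩ => iff_of_true (hf.isCyclic_iterate r.2.1.1 d).1 trivial
  | .inr ⟨_, ⟨s, hs, rfl⟩, d⟩ => by
    change f^[d] s < k ↔ (d : ℕ) < exitTime k f s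
    refine ⟨fun h => lt_of_le_of_ne (Nat.lt_succ_iff.1 d.2) fun hd => ?_,
      iterate_lt_of_lt_exitTime⟩
    rw [hd] at h
    exact absurd (hf.le_iterate_exitTime (hf.not_isCyclic_of_isSource hs)) (not_le.2 h)

theorem apply_decode (hf : IsExt k n f) : ∀ a : Address k n f, f (decode a) = decode a.next
  | .inl ⟨_, ⟨r, _, rfl⟩, d⟩ => by
    change f (f^[d] r) = f^[(d + 1) % minimalPeriod f r] r
    rw [iterate_mod_minimalPeriod_eq, iterate_succ_apply']
  | .inr ⟨_, ⟨s, hs, rfl⟩, d⟩ => by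
    change f (f^[d] s) = f^[min (d + 1) (exitTime k f s)] s
    obtain hd | hd := (Nat.lt_succ_iff.1 d.2).lt_or_eq
    · rw [min_eq_left hd, iterate_succ_apply']
    · rw [min_eq_right (by omega), hd]
      exact hf.eq_self _ (hf.le_iterate_exitTime (hf.not_isCyclic_of_isSource hs))

theorem decode_injective (hf : IsExt k n f) : Injective (decode : Address k n f → ℕ) := by
  rintro (⟨_, ⟨r, hr, rfl⟩, d⟩ | ⟨_, ⟨s, hs, rfl⟩, d⟩)
    (⟨_, ⟨r', hr', rfl⟩, d'⟩ | ⟨_, ⟨s', hs', rfl⟩, d'⟩) h <;> change f^[d] _ = f^[d'] _ at h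
  · obtain ⟨rfl, hd⟩ := hr.eq_of_iterate_eq hr' d.2 d'.2 h
    rw [Fin.ext hd]
  · exact absurd (h ▸ hf.isCyclic_iterate hr.1 d)
      (hf.not_isCyclic_iterate_of_isSource hs' (Nat.lt_succ_iff.1 d'.2))
  · exact absurd (h ▸ hf.isCyclic_iterate hr'.1 d')
      (hf.not_isCyclic_iterate_of_isSource hs (Nat.lt_succ_iff.1 d.2))
  · obtain ⟨rfl, hd⟩ := hf.eq_of_iterate_eq_of_isSource hs hs' (Nat.lt_succ_iff.1 d.2)
      (Nat.lt_succ_iff.1 d'.2) h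
    rw [Fin.ext hd]

theorem exists_decode_eq (hf : IsExt k n f) {u : ℕ} (hu : u < n) :
    ∃ a : Address k n f, decode a = u := by
  by_cases hc : IsCyclic k f u
  · obtain ⟨r, hr, hp, d, hd, rfl⟩ := hf.exists_isCycleRep_iterate_eq hc
    exact ⟨.inl ⟨_, ⟨r, hr, rfl⟩, ⟨d, hp ▸ hd⟩⟩, rfl⟩
  · obtain ⟨s, hs, d, rfl, hd⟩ := hf.exists_isSource_iterate_eq hu hc
    exact ⟨.inr ⟨_, ⟨s, hs, rfl⟩, ⟨d, by omega⟩⟩, rfl⟩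

noncomputable def decodeEquiv (hf : IsExt k n f) : Address k n f ≃ {u // u < n} :=
  ofBijective (fun a => ⟨decode a, hf.decode_lt a⟩)
    ⟨fun _ _ h => hf.decode_injective (congrArg Subtype.val h),
      fun u => (hf.exists_decode_eq u.2).imp fun _ h => Subtype.ext h⟩

theorem card_cycleReps_mul (hf : IsExt k n f) {i : ℕ} (hi : 0 < i) :
    Nat.card (CycleReps k f i) * i = Nat.card {u // u < k ∧ minimalPeriod f u = i} := by
  rw [← Nat.card_fin i, ← Nat.card_prod, Nat.card_fin]
  refine Nat.card_congr (ofBijective (fun p => ⟨f^[p.2] p.1.1, (hf.isCyclic_iterate p.1.2.1.1 _).1,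
    by rw [minimalPeriod_apply_iterate p.1.2.1.1.2, p.1.2.2]⟩) ⟨?_, ?_⟩)
  · rintro ⟨⟨r, hr, rfl⟩, d⟩ ⟨⟨r', hr', hr'i⟩, d'⟩ h
    obtain ⟨rfl, hd⟩ := hr.eq_of_iterate_eq hr' d.2 (d'.2.trans_eq hr'i.symm)
      (congrArg Subtype.val h)
    exact Prod.ext rfl (Fin.ext hd)
  · rintro ⟨u, hu, rfl⟩
    obtain ⟨r, hr, hp, d, hd, rfl⟩ :=
      hf.exists_isCycleRep_iterate_eq ⟨hu, minimalPeriod_pos_iff_mem_periodicPts.1 hi⟩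
    exact ⟨(⟨r, hr, hp⟩, ⟨d, hd⟩), rfl⟩

theorem card_sources (hf : IsExt k n f) {i : ℕ} (hi : i ≠ 0) :
    Nat.card (Sources k n f i) =
      Nat.card {u // u < k ∧ (∀ w, w < k → f w ≠ u) ∧ sInf {ℓ | k ≤ f^[ℓ] u} = i} :=
  Nat.card_congr <| subtypeEquivRight fun _ =>
    ⟨fun ⟨⟨_, hsrc⟩, he⟩ =>
      ⟨not_le.1 fun hku => hi (he.symm.trans (exitTime_eq_zero hku)), hsrc, he⟩,
      fun ⟨hu, hsrc, he⟩ => ⟨⟨hu.trans_le hf.le, hsrc⟩, he⟩⟩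

theorem exists_perm_semiconj_of_equiv {g : ℕ → ℕ} (hf : IsExt k n f) (hg : IsExt k n g)
    (E : Address k n f ≃ Address k n g) (hnext : ∀ a, E a.next = (E a).next)
    (hinner : ∀ a, (E a).IsInner ↔ a.IsInner) :
    ∃ σ : Perm ℕ, (∀ u, σ u < k ↔ u < k) ∧ (∀ u, σ u < n ↔ u < n) ∧ Semiconj σ f g := by
  let σ : Perm ℕ := Perm.ofSubtype (hf.decodeEquiv.symm.trans (E.trans hg.decodeEquiv))
  have hσ : ∀ a, σ (decode a) = decode (E a) := fun a => by
    rw [show σ (decode a) = _ from Perm.ofSubtype_apply_of_mem (p := (· < n)) _ (hf.decode_lt a)]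
    change (hg.decodeEquiv (E (hf.decodeEquiv.symm (hf.decodeEquiv a)))).1 = _
    rw [symm_apply_apply]
    rfl
  have hσ_ge : ∀ u, n ≤ u → σ u = u := fun u hu =>
    Perm.ofSubtype_apply_of_not_mem (p := (· < n)) _ (not_lt.2 hu)
  refine ⟨σ, fun u => ?_, fun u => ?_, fun u => ?_⟩ <;> obtain hu | hu := lt_or_ge u n
  · obtain ⟨a, rfl⟩ := hf.exists_decode_eq hu
    rw [hσ, hg.decode_lt_iff, hinner, hf.decode_lt_iff]
  · rw [hσ_ge u hu]
  · obtain ⟨a, rfl⟩ := hf.exists_decode_eq hu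
    rw [hσ]
    exact iff_of_true (hg.decode_lt _) (hf.decode_lt a)
  · rw [hσ_ge u hu]
  · obtain ⟨a, rfl⟩ := hf.exists_decode_eq hu
    rw [hf.apply_decode, hσ, hσ, hnext, hg.apply_decode]
  · rw [hf.eq_self u (hf.le.trans hu), hσ_ge u hu, hg.eq_self u (hg.le.trans hu)]

theorem exists_perm_semiconj {g : ℕ → ℕ} (hf : IsExt k n f) (hg : IsExt k n g)
    (hC : ∀ i, Nat.card (CycleReps k f i) = Nat.card (CycleReps k g i))
    (hS : ∀ i, i ≠ 0 → Nat.card (Sources k n f i) = Nat.card (Sources k n g i)) :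
    ∃ σ : Perm ℕ, (∀ u, σ u < k ↔ u < k) ∧ (∀ u, σ u < n ↔ u < n) ∧ Semiconj σ f g := by
  have := Finite.of_equiv _ hf.decodeEquiv.symm
  have := Finite.of_equiv _ hg.decodeEquiv.symm
  let eC i := (Finite.card_eq.1 (hC i)).some
  -- the number of isolated points is forced by the total count `n`
  have hS' : ∀ i, Nat.card (Sources k n f i) = Nat.card (Sources k n g i)
    | 0 => Addr.card_zero_eq eC (fun i => (Finite.card_eq.1 (hS (i + 1) i.succ_ne_zero)).some)
        (by rw [Nat.card_congr hf.decodeEquiv, Nat.card_congr hg.decodeEquiv])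
    | i + 1 => hS (i + 1) i.succ_ne_zero
  let eS i := (Finite.card_eq.1 (hS' i)).some
  exact hf.exists_perm_semiconj_of_equiv hg (Addr.congr eC eS) (Addr.congr_next eC eS)
    (Addr.isInner_congr eC eS)

end IsExt

theorem card_cycleReps_eq {g : ℕ → ℕ} (hf : IsExt k n f) (hg : IsExt k n g)
    (h : ∀ i, Nat.card {u // u < k ∧ minimalPeriod f u = i} =
      Nat.card {u // u < k ∧ minimalPeriod g u = i}) :
    ∀ i, Nat.card (CycleReps k f i) = Nat.card (CycleReps k g i)
  | 0 => by
    have (h : ℕ → ℕ) : IsEmpty (CycleReps k h 0) :=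
      ⟨fun r => (minimalPeriod_pos_of_mem_periodicPts r.2.1.1.2).ne' r.2.2⟩
    rw [Nat.card_of_isEmpty, Nat.card_of_isEmpty]
  | i + 1 => Nat.eq_of_mul_eq_mul_right i.succ_pos <| by
    rw [hf.card_cycleReps_mul i.succ_pos, hg.card_cycleReps_mul i.succ_pos, h]

end Dynamics

theorem exists_perm_semiconj_extFun {k n : ℕ} {π ρ : Fin k → Fin n} (hπ : Injective π)
    (hρ : Injective ρ) (h : SameCycleType π ρ) :
    ∃ σ : Perm ℕ, (∀ u, σ u < k ↔ u < k) ∧ (∀ u, σ u < n ↔ u < n) ∧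
      Semiconj σ (extFun π) (extFun ρ) := by
  have hf := isExt_extFun hπ
  have hg := isExt_extFun hρ
  refine hf.exists_perm_semiconj hg (card_cycleReps_eq hf hg fun i => (h i).1) fun i hi => ?_
  rw [hf.card_sources hi, hg.card_sources hi]
  exact (h i).2

theorem forall_ne_iff_of_semiconj {k : ℕ} {f g : ℕ → ℕ} (σ : Perm ℕ)
    (hk : ∀ u, σ u < k ↔ u < k) (h : Semiconj σ f g) (u : ℕ) :
    (∀ w, w < k → g w ≠ σ u) ↔ ∀ w, w < k → f w ≠ u :=
  (σ.forall_congr (p := fun w => w < k → f w ≠ u) (q := fun w => w < k → g w ≠ σ u) fun w => by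
    rw [hk, ← h w, σ.injective.ne_iff]).symm

theorem exitTime_eq_of_semiconj {k : ℕ} {f g : ℕ → ℕ} (σ : Perm ℕ)
    (hk : ∀ u, σ u < k ↔ u < k) (h : Semiconj σ f g) (u : ℕ) :
    exitTime k g (σ u) = exitTime k f u := by
  unfold exitTime
  congr 1
  ext ℓ
  simp only [Set.mem_ofPred_eq, ← h.iterate_right ℓ u, ← not_lt, hk]

theorem sameCycleType_of_semiconj {k n : ℕ} {π ρ : Fin k → Fin n} (σ : Perm ℕ)
    (hk : ∀ u, σ u < k ↔ u < k) (h : Semiconj σ (extFun π) (extFun ρ)) : SameCycleType π ρ :=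
  fun i => ⟨Nat.card_congr (σ.subtypeEquiv fun u => by rw [hk, minimalPeriod_eq_of_semiconj σ h]),
    Nat.card_congr (σ.subtypeEquiv fun u => by
      change _ ↔ _ ∧ _ ∧ exitTime k (extFun ρ) (σ u) = i
      rw [hk, forall_ne_iff_of_semiconj σ hk h, exitTime_eq_of_semiconj σ hk h]
      rfl)⟩

end KPerm

def finPerm {m : ℕ} (σ : Perm ℕ) (h : ∀ u, σ u < m ↔ u < m) : Perm (Fin m) :=
  Fin.equivSubtype.symm.permCongr (σ.subtypePerm h)

@[simp]
theorem finPerm_apply_val {m : ℕ} (σ : Perm ℕ) (h : ∀ u, σ u < m ↔ u < m) (i : Fin m) :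
    (finPerm σ h i : ℕ) = σ i :=
  rfl

namespace arrangementGraph

def relabel {n k : ℕ} (e₁ : Perm (Fin k)) (e₂ : Perm (Fin n)) :
    arrangementGraph n k ≃g arrangementGraph n k where
  toEquiv := (e₁.arrowCongr e₂).subtypeEquiv fun π => by
    change Injective π ↔ Injective (e₂ ∘ π ∘ e₁.symm)
    rw [EquivLike.comp_injective, EquivLike.injective_comp]
  map_rel_iff' {π ρ} := (e₁.existsUnique_congr fun i => by simp).symm

theorem coe_relabel_apply {n k : ℕ} (e₁ : Perm (Fin k)) (e₂ : Perm (Fin n))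
    (π : {π : Fin k → Fin n // Injective π}) : (relabel e₁ e₂ π).1 = e₂ ∘ π.1 ∘ e₁.symm :=
  rfl

theorem semiconj_extFun_relabel {n k : ℕ} (σ : Perm ℕ) (hk : ∀ u, σ u < k ↔ u < k)
    (hn : ∀ u, σ u < n ↔ u < n) (ρ : {π : Fin k → Fin n // Injective π}) :
    Semiconj σ (extFun ρ.1) (extFun (relabel (finPerm σ hk) (finPerm σ hn) ρ).1) := by
  intro u
  by_cases hu : u < k
  · have hσu : σ u < k := (hk u).2 hu
    have : (finPerm σ hk).symm ⟨σ u, hσu⟩ = ⟨u, hu⟩ := (symm_apply_eq _).2 rfl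
    simp [extFun, hu, hσu, this, coe_relabel_apply]
  · rw [extFun, dif_neg hu, extFun, dif_neg (by rwa [hk])]

theorem exists_iso_of_sameCycleType {n k : ℕ} {π₁ π₂ : {π : Fin k → Fin n // Injective π}}
    (h : SameCycleType π₁.1 π₂.1) :
    ∃ Φ : arrangementGraph n k ≃g arrangementGraph n k,
      Φ π₁ = π₂ ∧ ∀ ρ, SameCycleType ρ.1 (Φ ρ).1 := by
  obtain ⟨σ, hk, hn, hσ⟩ := KPerm.exists_perm_semiconj_extFun π₁.2 π₂.2 h
  refine ⟨relabel (finPerm σ hk) (finPerm σ hn), ?_,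
    fun ρ => KPerm.sameCycleType_of_semiconj σ hk (semiconj_extFun_relabel σ hk hn ρ)⟩
  refine Subtype.ext (KPerm.extFun_injective (funext fun v => ?_))
  obtain ⟨u, rfl⟩ := σ.surjective v
  exact (semiconj_extFun_relabel σ hk hn π₁ u).symm.trans (hσ u)

end arrangementGraph

theorem cycleTypePartition_equitable_general (n k : ℕ) :
    ∀ X ∈ {C : Set {π : Fin k → Fin n // Function.Injective π} |
        ∃ π : {π : Fin k → Fin n // Function.Injective π}, C = {ρ | SameCycleType π.1 ρ.1}},
      ∀ Y ∈ {C : Set {π : Fin k → Fin n // Function.Injective π} |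
        ∃ π : {π : Fin k → Fin n // Function.Injective π}, C = {ρ | SameCycleType π.1 ρ.1}},
      ∀ π₁ ∈ X, ∀ π₂ ∈ X,
        Nat.card {τ // (arrangementGraph n k).Adj π₁ τ ∧ τ ∈ Y} =
          Nat.card {τ // (arrangementGraph n k).Adj π₂ τ ∧ τ ∈ Y} := by
  rintro X ⟨π₀, rfl⟩ Y ⟨πY, rfl⟩ π₁ h₁ π₂ h₂
  obtain ⟨Φ, hΦπ, hΦ⟩ :=
    arrangementGraph.exists_iso_of_sameCycleType ((SameCycleType.symm h₁).trans h₂)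
  refine Nat.card_congr (Φ.toEquiv.subtypeEquiv fun ρ => ?_)
  rw [← hΦπ]
  exact and_congr Φ.map_adj_iff.symm ⟨fun h => h.trans (hΦ ρ), fun h => h.trans (hΦ ρ).symm⟩

theorem cycleTypePartition_equitable (n k : ℕ) (hkn : k ≤ n) :
    ∀ X ∈ {C : Set {π : Fin k → Fin n // Function.Injective π} |
        ∃ π : {π : Fin k → Fin n // Function.Injective π}, C = {ρ | SameCycleType π.1 ρ.1}},
      ∀ Y ∈ {C : Set {π : Fin k → Fin n // Function.Injective π} |
        ∃ π : {π : Fin k → Fin n // Function.Injective π}, C = {ρ | SameCycleType π.1 ρ.1}},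
      ∀ π₁ ∈ X, ∀ π₂ ∈ X,
        Nat.card {τ // (arrangementGraph n k).Adj π₁ τ ∧ τ ∈ Y} =
          Nat.card {τ // (arrangementGraph n k).Adj π₂ τ ∧ τ ∈ Y} :=
  cycleTypePartition_equitable_general n k
end

section
/- Let G be a walk-regular graph and Π=(V_1,...,V_m) an equitable partition of G with |V_1|=1 and quotient matrix Q. Then every eigenvalue of G is an eigenvalue of Q. -/
/-!
Let `S` be the characteristic matrix of the partition. Equitability says `A S = S Q`, hence
`f(A) S = S f(Q)` for every polynomial `f`; read at the singleton cell `{v₀}` this gives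
`f(A)_{v₀ v₀} = f(Q)_{0 0}`, and walk-regularity makes every diagonal entry of `f(A)` equal
to it. For `p` the characteristic polynomial of `Q`, the real symmetric matrix `B = p(A)` thus has
`tr(B²) = |V| · p(Q)²_{0 0} = 0`, so `B = 0` and every eigenvalue of `A` is a root of `p`.
-/

open Matrix Polynomial

namespace Matrix

variable {R m n : Type*} [Fintype m] [DecidableEq m] [Fintype n]

theorem aeval_mul_eq_mul_aeval [DecidableEq n] [CommSemiring R] {A : Matrix m m R}
    {S : Matrix m n R} {B : Matrix n n R} (h : A * S = S * B) (p : R[X]) :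
    aeval A p * S = S * aeval B p := by
  have hpow : ∀ k : ℕ, A ^ k * S = S * B ^ k := by
    intro k
    induction k with
    | zero => simp
    | succ k ih => rw [pow_succ, pow_succ, Matrix.mul_assoc, h, ← Matrix.mul_assoc, ih,
        Matrix.mul_assoc]
  induction p using Polynomial.induction_on' with
  | add p q hp hq => rw [map_add, map_add, Matrix.add_mul, Matrix.mul_add, hp, hq]
  | monomial k a =>
    simp only [aeval_monomial, ← Algebra.smul_def, Matrix.smul_mul, Matrix.mul_smul, hpow]

theorem IsSymm.aeval [DecidableEq n] [CommSemiring R] {A : Matrix n n R} (h : A.IsSymm)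
    (p : R[X]) : (aeval A p).IsSymm := by
  induction p using Polynomial.induction_on' with
  | add p q hp hq => rw [map_add]; exact hp.add hq
  | monomial k a =>
    rw [aeval_monomial, ← Algebra.smul_def]
    exact (h.pow k).smul a

theorem aeval_apply_eq_of_pow_apply_eq [DecidableEq n] [CommSemiring R] {A : Matrix n n R}
    {i j k l : n} (h : ∀ r : ℕ, (A ^ r) i j = (A ^ r) k l) (p : R[X]) :
    aeval A p i j = aeval A p k l := by
  induction p using Polynomial.induction_on' with
  | add p q hp hq => simp only [map_add, add_apply, hp, hq]
  | monomial r a => simp only [aeval_monomial, ← Algebra.smul_def, smul_apply, h r]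

theorem IsSymm.eq_zero_of_trace_mul_self_eq_zero [PartialOrder R] [Ring R]
    [StarRing R] [TrivialStar R] [StarOrderedRing R] [NoZeroDivisors R] {B : Matrix n n R}
    (hB : B.IsSymm) (h : (B * B).trace = 0) : B = 0 := by
  rwa [← trace_mul_conjTranspose_self_eq_zero_iff, conjTranspose_eq_transpose_of_trivial,
    hB.eq]

end Matrix

section EquitablePartition

variable {V ι : Type*} [DecidableEq V]

def partitionMatrix (R : Type*) [Zero R] [One R] (C : ι → Finset V) : Matrix V ι R :=
  Matrix.of fun v i => if v ∈ C i then 1 else 0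

theorem mul_partitionMatrix_apply [Fintype V] {R U : Type*} [NonAssocSemiring R]
    (M : Matrix U V R) (C : ι → Finset V) (u : U) (i : ι) :
    (M * partitionMatrix R C) u i = ∑ v ∈ C i, M u v := by
  simp [partitionMatrix, mul_apply, mul_ite, Finset.sum_ite_mem]

theorem partitionMatrix_mul_apply [Fintype ι] {R U : Type*} [NonAssocSemiring R]
    {C : ι → Finset V} (hC : ∀ v, ∃! i, v ∈ C i) (N : Matrix ι U R) {v : V} {i : ι}
    (hv : v ∈ C i) (u : U) :
    (partitionMatrix R C * N) v u = N i u := by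
  rw [mul_apply, Finset.sum_eq_single i]
  · simp [partitionMatrix, hv]
  · intro k _ hk
    have hvk : v ∉ C k := fun hvk => hk ((hC v).unique hvk hv)
    simp [partitionMatrix, hvk]
  · simp

theorem SimpleGraph.adjMatrix_mul_partitionMatrix [Fintype V] [Fintype ι] {R : Type*}
    [NonAssocSemiring R] (G : SimpleGraph V) [DecidableRel G.Adj] {C : ι → Finset V}
    (hC : ∀ v, ∃! i, v ∈ C i) {Q : Matrix ι ι ℕ}
    (hQ : ∀ i j, ∀ v ∈ C i, ((C j).filter (G.Adj v)).card = Q i j) :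
    G.adjMatrix R * partitionMatrix R C = partitionMatrix R C * Q.map (Nat.cast : ℕ → R) := by
  ext v j
  obtain ⟨i, hvi, -⟩ := hC v
  rw [mul_partitionMatrix_apply, partitionMatrix_mul_apply hC _ hvi, map_apply, ← hQ i j v hvi]
  simp [SimpleGraph.adjMatrix_apply, Finset.sum_boole]

end EquitablePartition

theorem SimpleGraph.adjMatrix_pow_apply_eq_cast {V R : Type*} [Fintype V] [DecidableEq V]
    [Semiring R] (G : SimpleGraph V) [DecidableRel G.Adj] (r : ℕ) (v w : V) :
    (G.adjMatrix R ^ r) v w = ((G.adjMatrix ℕ ^ r) v w : R) := by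
  have hcast : G.adjMatrix R = (Nat.castRingHom R).mapMatrix (G.adjMatrix ℕ) := by
    ext; simp [SimpleGraph.adjMatrix_apply]
  rw [hcast, ← map_pow]
  rfl

attribute [local instance] Classical.propDecidable

theorem walkRegular_spectrum_subset_quotient_general {V : Type*} [Fintype V]
    (G : SimpleGraph V)
    (hwr : ∀ (r : ℕ) (v w : V), (G.adjMatrix ℕ ^ r) v v = (G.adjMatrix ℕ ^ r) w w)
    (m : ℕ) (C : Fin (m + 1) → Finset V) (Q : Matrix (Fin (m + 1)) (Fin (m + 1)) ℕ)
    (hpart : ∀ v, ∃! i, v ∈ C i) (h1 : (C 0).card = 1)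
    (heq : ∀ i j, ∀ v ∈ C i, ((C j).filter (G.Adj v)).card = Q i j) :
    ∀ μ : ℝ, μ ∈ spectrum ℝ (G.adjMatrix ℝ) →
      μ ∈ spectrum ℝ (Q.map (Nat.cast : ℕ → ℝ)) := by
  intro μ hμ
  obtain ⟨v₀, hv₀⟩ := Finset.card_eq_one.mp h1
  have hv₀C : v₀ ∈ C 0 := hv₀ ▸ Finset.mem_singleton_self v₀
  have hdiag (f : ℝ[X]) (w : V) :
      aeval (G.adjMatrix ℝ) f w w = aeval (Q.map (Nat.cast : ℕ → ℝ)) f 0 0 := by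
    have h := congrFun₂
      (aeval_mul_eq_mul_aeval (G.adjMatrix_mul_partitionMatrix hpart heq) f) v₀ 0
    rw [mul_partitionMatrix_apply, hv₀, Finset.sum_singleton,
      partitionMatrix_mul_apply hpart _ hv₀C] at h
    rw [← h]
    refine aeval_apply_eq_of_pow_apply_eq (fun r => ?_) f
    simp only [G.adjMatrix_pow_apply_eq_cast (R := ℝ), hwr r w v₀]
  set p := (Q.map (Nat.cast : ℕ → ℝ)).charpoly
  have hp : aeval (G.adjMatrix ℝ) p = 0 := by
    refine (G.isSymm_adjMatrix.aeval p).eq_zero_of_trace_mul_self_eq_zero ?_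
    simp only [trace, diag_apply, ← map_mul, hdiag]
    simp [p, aeval_self_charpoly]
  have : Nonempty V := ⟨v₀⟩
  have hroot := spectrum.subset_polynomial_aeval (G.adjMatrix ℝ) p ⟨μ, hμ, rfl⟩
  rw [hp, spectrum.zero_eq, Set.mem_singleton_iff] at hroot
  exact mem_spectrum_iff_isRoot_charpoly.mpr hroot

/-- Let `G` be a walk-regular graph (all diagonal entries of each power of the adjacency
matrix are equal) and `Π = (C 0, …, C m)` an equitable partition of `G` with `|C 0| = 1`
and quotient matrix `Q`. Then every eigenvalue of `G` is an eigenvalue of `Q`. -/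
theorem walkRegular_spectrum_subset_quotient {V : Type*} [Fintype V]
    (G : SimpleGraph V)
    (hwr : ∀ (r : ℕ) (v w : V), (G.adjMatrix ℕ ^ r) v v = (G.adjMatrix ℕ ^ r) w w)
    (m : ℕ) (C : Fin (m + 1) → Finset V) (Q : Matrix (Fin (m + 1)) (Fin (m + 1)) ℕ)
    (hpart : ∀ v, ∃! i, v ∈ C i) (hne : ∀ i, (C i).Nonempty) (h1 : (C 0).card = 1)
    (heq : ∀ i j, ∀ v ∈ C i, ((C j).filter (G.Adj v)).card = Q i j) :
    ∀ μ : ℝ, μ ∈ spectrum ℝ (G.adjMatrix ℝ) →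
      μ ∈ spectrum ℝ (Q.map (Nat.cast : ℕ → ℝ)) :=
  walkRegular_spectrum_subset_quotient_general G hwr m C Q hpart h1 heq
end

section
/- Let G be a walk-regular graph with ν vertices, Π=(V_1,...,V_m) an equitable partition with |V_1|=1 and quotient matrix Q. Let S=diag(√|V_1|,...,√|V_m|) and P=SQS^{-1}. If {x_1,...,x_ℓ} is an orthonormal basis of the eigenspace of P for an eigenvalue λ, then the multiplicity of λ as an eigenvalue of G equals ν·∑_{i=1}^ℓ ((x_i)_1)², where (x_i)_1 is the first coordinate of x_i. -/
/-!
Scale the columns of the characteristic matrix of the partition to unit length to get `B` with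
`Bᵀ B = 1` and `A B = B P`, where `A` is the adjacency matrix. Hence `P = Bᵀ A B` is symmetric and
every eigenvalue of `P` is one of `A`. Let `p` be a polynomial with `p(μ) = 1` vanishing at the
other eigenvalues of `A`. Since `A` and `P` are diagonalisable, `p(A)` is the orthogonal projection
onto the `μ`-eigenspace of `A`, whose trace is the multiplicity of `μ`, and `p(P) = ∑ᵢ xᵢ xᵢᵀ`.
Walk-regularity makes the diagonal of every polynomial in `A` constant, so the multiplicity is
`ν · p(A)_{v₀v₀}`, where `C 0 = {v₀}`; finally
`p(A)_{v₀v₀} = (p(A) B)_{v₀0} = (B p(P))_{v₀0} = p(P)_{00}`.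
-/

open Matrix Polynomial

theorem Polynomial.exists_eval_eq_one_and_eval_eq_zero {K : Type*} [Field K] {s : Set K}
    (hs : s.Finite) (μ : K) : ∃ p : K[X], p.eval μ = 1 ∧ ∀ θ ∈ s, θ ≠ μ → p.eval θ = 0 := by
  classical
  refine ⟨Lagrange.basis (insert μ hs.toFinset) id μ, ?_, fun θ hθ hθμ => ?_⟩
  · exact Lagrange.eval_basis_self (v := id) (Set.injOn_id _) (Finset.mem_insert_self _ _)
  · exact Lagrange.eval_basis_of_ne (v := id) hθμ.symm
      (Finset.mem_insert_of_mem (hs.mem_toFinset.2 hθ))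

namespace Matrix

variable {n ι : Type*} [Fintype n] [Fintype ι]

theorem IsSymm.dotProduct_eq_zero_of_eigenvalue_ne {R : Type*} [CommRing R] [IsDomain R]
    {P : Matrix n n R} (hP : P.IsSymm) {θ θ' : R} {y y' : n → R}
    (hy : P *ᵥ y = θ • y) (hy' : P *ᵥ y' = θ' • y') (hθ : θ ≠ θ') : y ⬝ᵥ y' = 0 := by
  have h : θ * (y ⬝ᵥ y') = θ' * (y ⬝ᵥ y') := by
    rw [← smul_eq_mul, ← smul_dotProduct, ← hy, ← smul_eq_mul, ← dotProduct_smul, ← hy',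
      dotProduct_mulVec, ← mulVec_transpose, hP.eq]
  exact (mul_eq_mul_right_iff.mp h).resolve_left hθ

theorem sum_vecMulVec_mulVec_of_mem_span [DecidableEq ι] {K : Type*} [Field K]
    {x : ι → n → K} (horth : ∀ i j, x i ⬝ᵥ x j = if i = j then 1 else 0) {y : n → K}
    (hy : y ∈ Submodule.span K (Set.range x)) : (∑ i, vecMulVec (x i) (x i)) *ᵥ y = y := by
  refine LinearMap.eqOn_span' (f := mulVecLin (∑ i, vecMulVec (x i) (x i))) (g := LinearMap.id)
    ?_ hy
  rintro _ ⟨j, rfl⟩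
  simp [vecMulVec_mulVec, horth]

theorem IsHermitian.of_mul_eq_mul [DecidableEq ι] {R : Type*} [CommRing R] [StarRing R]
    {A : Matrix n n R} {B : Matrix n ι R} {P : Matrix ι ι R} (hA : A.IsHermitian) (hB : Bᴴ * B = 1)
    (hAB : A * B = B * P) : P.IsHermitian := by
  have hP : Bᴴ * A * B = P := by
    rw [Matrix.mul_assoc, hAB, ← Matrix.mul_assoc, hB, Matrix.one_mul]
  exact hP ▸ isHermitian_conjTranspose_mul_mul B hA

theorem diagonal_mul_mul_inv_diagonal [DecidableEq ι] {K : Type*} [Field K] {s : ι → K}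
    (hs : ∀ i, s i ≠ 0) (M : Matrix ι ι K) :
    diagonal s * M * (diagonal s)⁻¹ = of fun i j => s i * M i j / s j := by
  have hinv : (diagonal s)⁻¹ = diagonal s⁻¹ :=
    inv_eq_left_inv (by simp [diagonal_mul_diagonal, hs])
  ext i j
  simp [hinv, div_eq_mul_inv]

variable [DecidableEq n]

theorem aeval_mulVec_of_mulVec_eq_smul {R : Type*} [CommRing R] {A : Matrix n n R} {θ : R}
    {y : n → R} (hy : A *ᵥ y = θ • y) (p : R[X]) : aeval A p *ᵥ y = p.eval θ • y := by
  by_cases hy0 : y = 0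
  · simp [hy0]
  have hvec : Module.End.HasEigenvector (toLin' A) θ y :=
    ⟨Module.End.mem_eigenspace_iff.mpr (by simpa using hy), hy0⟩
  rw [← toLin'_apply, ← Module.End.aeval_apply_of_hasEigenvector hvec]
  exact congrFun (congrArg DFunLike.coe (aeval_algHom_apply toLinAlgEquiv' A p)).symm y

theorem mem_spectrum_of_mulVec_eq_smul {K : Type*} [Field K] {A : Matrix n n K} {θ : K}
    {y : n → K} (hy0 : y ≠ 0) (hy : A *ᵥ y = θ • y) : θ ∈ spectrum K A := by
  rw [← spectrum_toLin', ← Module.End.hasEigenvalue_iff_mem_spectrum]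
  exact Module.End.hasEigenvalue_of_hasEigenvector
    ⟨Module.End.mem_eigenspace_iff.mpr (by simpa using hy), hy0⟩

theorem IsHermitian.ext_of_mulVec_eigenvector {𝕜 : Type*} [RCLike 𝕜] {A M N : Matrix n n 𝕜}
    (hA : A.IsHermitian)
    (h : ∀ (θ : 𝕜) (y : n → 𝕜), y ≠ 0 → A *ᵥ y = θ • y → M *ᵥ y = N *ᵥ y) : M = N := by
  let b := hA.eigenvectorBasis.toBasis.map (WithLp.linearEquiv 2 𝕜 (n → 𝕜))
  refine toLin'.injective (b.ext fun k => ?_)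
  have hk : b k = ⇑(hA.eigenvectorBasis k) := by simp [b]
  simp only [toLin'_apply, hk]
  refine h _ _ ?_ (by rw [hA.mulVec_eigenvectorBasis k, RCLike.real_smul_eq_coe_smul (K := 𝕜)])
  simpa using hA.eigenvectorBasis.orthonormal.ne_zero k

section Intertwining

variable [DecidableEq ι] {R : Type*} [CommRing R] {A : Matrix n n R} {B : Matrix n ι R}
  {P : Matrix ι ι R}

theorem aeval_mul_eq_mul_aeval_s13 (hAB : A * B = B * P) (p : R[X]) :
    aeval A p * B = B * aeval P p := by
  have hpow : ∀ r : ℕ, A ^ r * B = B * P ^ r := by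
    intro r
    induction r with
    | zero => simp
    | succ r ih =>
      rw [pow_succ', Matrix.mul_assoc, ih, ← Matrix.mul_assoc, hAB, Matrix.mul_assoc, ← pow_succ']
  induction p using Polynomial.induction_on' with
  | add p q hp hq => rw [map_add, map_add, Matrix.add_mul, Matrix.mul_add, hp, hq]
  | monomial r a =>
    rw [aeval_monomial, aeval_monomial, ← Algebra.smul_def, ← Algebra.smul_def,
      Matrix.smul_mul, Matrix.mul_smul, hpow]

theorem spectrum_subset_of_mul_eq_mul {K : Type*} [Field K] {A : Matrix n n K}
    {B : Matrix n ι K} {B' : Matrix ι n K} {P : Matrix ι ι K} (hB : B' * B = 1)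
    (hAB : A * B = B * P) : spectrum K P ⊆ spectrum K A := by
  intro θ hθ
  rw [← spectrum_toLin', ← Module.End.hasEigenvalue_iff_mem_spectrum] at hθ
  obtain ⟨y, hy, hy0⟩ := hθ.exists_hasEigenvector
  rw [Module.End.mem_eigenspace_iff, toLin'_apply] at hy
  refine mem_spectrum_of_mulVec_eq_smul (y := B *ᵥ y) (fun hBy => hy0 ?_) ?_
  · rw [← one_mulVec y, ← hB, ← mulVec_mulVec, hBy, mulVec_zero]
  · rw [mulVec_mulVec, hAB, ← mulVec_mulVec, hy, mulVec_smul]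

end Intertwining

theorem trace_aeval_eq_card_mul {R : Type*} [CommRing R] {A : Matrix n n R}
    (hA : ∀ (r : ℕ) (v w : n), (A ^ r) v v = (A ^ r) w w) (p : R[X]) (w : n) :
    trace (aeval A p) = Fintype.card n * aeval A p w w := by
  have hdiag : ∀ v, aeval A p v v = aeval A p w w := fun v => by
    simp only [aeval_eq_sum_range, sum_apply, smul_apply, hA _ v w]
  simp [trace, hdiag]

section Projection

variable {A : Matrix n n ℝ} {μ : ℝ} {p : ℝ[X]}

theorem IsHermitian.mul_aeval_eq_smul (hA : A.IsHermitian)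
    (hp : ∀ θ ∈ spectrum ℝ A, θ ≠ μ → p.eval θ = 0) : A * aeval A p = μ • aeval A p := by
  refine hA.ext_of_mulVec_eigenvector fun θ y hy0 hy => ?_
  rw [← mulVec_mulVec, smul_mulVec, aeval_mulVec_of_mulVec_eq_smul hy, mulVec_smul, hy,
    smul_comm]
  rcases eq_or_ne θ μ with rfl | hθ
  · rfl
  · rw [hp θ (mem_spectrum_of_mulVec_eq_smul hy0 hy) hθ, zero_smul, smul_zero, smul_zero]

theorem IsHermitian.isProj_aeval (hA : A.IsHermitian) (hpμ : p.eval μ = 1)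
    (hp : ∀ θ ∈ spectrum ℝ A, θ ≠ μ → p.eval θ = 0) :
    LinearMap.IsProj (Module.End.eigenspace (toLin' A) μ) (toLin' (aeval A p)) where
  map_mem y := by
    rw [Module.End.mem_eigenspace_iff, toLin'_apply, toLin'_apply, mulVec_mulVec,
      hA.mul_aeval_eq_smul hp, smul_mulVec]
  map_id y hy := by
    rw [Module.End.mem_eigenspace_iff, toLin'_apply] at hy
    rw [toLin'_apply, aeval_mulVec_of_mulVec_eq_smul hy, hpμ, one_smul]

theorem IsHermitian.finrank_eigenspace_eq_trace_aeval (hA : A.IsHermitian)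
    (hpμ : p.eval μ = 1) (hp : ∀ θ ∈ spectrum ℝ A, θ ≠ μ → p.eval θ = 0) :
    (Module.finrank ℝ (Module.End.eigenspace (toLin' A) μ) : ℝ) = trace (aeval A p) := by
  rw [← (hA.isProj_aeval hpμ hp).trace, LinearMap.trace_eq_matrix_trace ℝ (Pi.basisFun ℝ n),
    LinearMap.toMatrix_eq_toMatrix', LinearMap.toMatrix'_toLin']

theorem IsHermitian.aeval_eq_sum_vecMulVec [DecidableEq ι] (hA : A.IsHermitian)
    {x : ι → n → ℝ} (heig : ∀ i, A *ᵥ x i = μ • x i)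
    (horth : ∀ i j, x i ⬝ᵥ x j = if i = j then 1 else 0)
    (hspan : ∀ y : n → ℝ, A *ᵥ y = μ • y → y ∈ Submodule.span ℝ (Set.range x))
    (hpμ : p.eval μ = 1) (hp : ∀ θ ∈ spectrum ℝ A, θ ≠ μ → p.eval θ = 0) :
    aeval A p = ∑ i, vecMulVec (x i) (x i) := by
  have hsymm : A.IsSymm := by rw [IsSymm, ← conjTranspose_eq_transpose_of_trivial]; exact hA
  refine hA.ext_of_mulVec_eigenvector fun θ y hy0 hy => ?_
  rw [aeval_mulVec_of_mulVec_eq_smul hy]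
  rcases eq_or_ne θ μ with rfl | hθ
  · rw [hpμ, one_smul, sum_vecMulVec_mulVec_of_mem_span horth (hspan y hy)]
  · have hxy : ∀ i, x i ⬝ᵥ y = 0 := fun i =>
      hsymm.dotProduct_eq_zero_of_eigenvalue_ne (heig i) hy hθ.symm
    simp [hp θ (mem_spectrum_of_mulVec_eq_smul hy0 hy) hθ, sum_mulVec, vecMulVec_mulVec, hxy]

end Projection

end Matrix

theorem SimpleGraph.adjMatrix_pow_apply_self_eq {V : Type*} [Fintype V] [DecidableEq V]
    {G : SimpleGraph V} [DecidableRel G.Adj]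
    (hwr : ∀ (r : ℕ) (v w : V), (G.adjMatrix ℕ ^ r) v v = (G.adjMatrix ℕ ^ r) w w)
    (R : Type*) [Semiring R] (r : ℕ) (v w : V) :
    (G.adjMatrix R ^ r) v v = (G.adjMatrix R ^ r) w w := by
  have h := hwr r v w
  simp only [adjMatrix_pow_apply_eq_card_walk, Nat.cast_id] at h ⊢
  rw [h]

section Partition

variable {V ι : Type*} [DecidableEq V] {C : ι → Finset V}

noncomputable def normalizedCharMatrix (C : ι → Finset V) : Matrix V ι ℝ :=
  Matrix.of fun v i => if v ∈ C i then (√((C i).card : ℝ))⁻¹ else 0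

theorem mul_normalizedCharMatrix_apply_of_eq_singleton [Fintype V] {v : V} {i : ι}
    (h : C i = {v}) {m : Type*} (M : Matrix m V ℝ) (u : m) :
    (M * normalizedCharMatrix C) u i = M u v := by
  simp [mul_apply, normalizedCharMatrix, h]

variable [DecidableEq ι]

theorem normalizedCharMatrix_apply_of_mem (hpart : ∀ v, ∃! i, v ∈ C i) {v : V} {i : ι}
    (hv : v ∈ C i) (k : ι) :
    normalizedCharMatrix C v k = if k = i then (√((C i).card : ℝ))⁻¹ else 0 := by
  by_cases hk : k = i
  · subst hk; simp [normalizedCharMatrix, hv]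
  · have : v ∉ C k := fun h => hk ((hpart v).unique h hv)
    simp [normalizedCharMatrix, hk, this]

theorem normalizedCharMatrix_mul_apply_of_eq_singleton [Fintype ι]
    (hpart : ∀ v, ∃! i, v ∈ C i) {v : V} {i : ι} (h : C i = {v}) {m : Type*}
    (M : Matrix ι m ℝ) (j : m) :
    (normalizedCharMatrix C * M) v j = M i j := by
  have hv : v ∈ C i := h ▸ Finset.mem_singleton_self v
  simp [mul_apply, normalizedCharMatrix_apply_of_mem hpart hv, h]

variable [Fintype V]

theorem transpose_mul_normalizedCharMatrix (hpart : ∀ v, ∃! i, v ∈ C i)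
    (hne : ∀ i, (C i).Nonempty) : (normalizedCharMatrix C)ᵀ * normalizedCharMatrix C = 1 := by
  ext i j
  have hsum : ∀ v ∈ C i, normalizedCharMatrix C v i * normalizedCharMatrix C v j
      = if j = i then ((C i).card : ℝ)⁻¹ else 0 := fun v hv => by
    rw [normalizedCharMatrix_apply_of_mem hpart hv, normalizedCharMatrix_apply_of_mem hpart hv,
      if_pos rfl]
    split_ifs <;> simp [← mul_inv, Real.mul_self_sqrt]
  rw [mul_apply, ← Finset.sum_subset (Finset.subset_univ (C i)),
    Finset.sum_congr rfl fun v hv => by rw [transpose_apply, hsum v hv]]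
  · rcases eq_or_ne i j with rfl | hij
    · simp [(hne i).card_pos.ne']
    · simp [Ne.symm hij, one_apply_ne hij]
  · intro v _ hv
    simp [normalizedCharMatrix, hv]

theorem adjMatrix_mul_normalizedCharMatrix [Fintype ι] (G : SimpleGraph V) [DecidableRel G.Adj]
    {Q : Matrix ι ι ℕ} (hpart : ∀ v, ∃! i, v ∈ C i) (hne : ∀ i, (C i).Nonempty)
    (heq : ∀ i j, ∀ v ∈ C i, ((C j).filter (G.Adj v)).card = Q i j) :
    G.adjMatrix ℝ * normalizedCharMatrix C = normalizedCharMatrix C *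
      (diagonal (fun i => √((C i).card : ℝ)) * Q.map (Nat.cast : ℕ → ℝ) *
        (diagonal fun i => √((C i).card : ℝ))⁻¹) := by
  have hsqrt : ∀ i, √((C i).card : ℝ) ≠ 0 := fun i => by simp [(hne i).card_pos.ne']
  ext v j
  obtain ⟨i, hv, -⟩ := hpart v
  have hnbr : (Finset.univ.filter fun u => G.Adj v u ∧ u ∈ C j) = (C j).filter (G.Adj v) := by
    ext u; simp [and_comm]
  rw [diagonal_mul_mul_inv_diagonal hsqrt, mul_apply, mul_apply]
  simp only [normalizedCharMatrix_apply_of_mem hpart hv, of_apply, map_apply, ite_mul, zero_mul,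
    Finset.sum_ite_eq', Finset.mem_univ, if_true]
  simp only [normalizedCharMatrix, SimpleGraph.adjMatrix_apply, of_apply, ite_mul, one_mul,
    zero_mul]
  rw [← heq i j v hv, ← hnbr]
  simp only [← ite_and, ← Finset.sum_filter, Finset.sum_const, nsmul_eq_mul]
  field_simp [hsqrt i]

end Partition

attribute [local instance] Classical.propDecidable

/-- Godsil–McKay multiplicity formula. Let `G` be a walk-regular graph with `ν` vertices,
`Π = (C 0, …, C m)` an equitable partition with `|C 0| = 1` and quotient matrix `Q`.
Let `S = diag(√|C 0|, …, √|C m|)` and `P = S Q S⁻¹`. If `x 0, …, x (ℓ-1)` is an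
orthonormal basis of the eigenspace of `P` for the eigenvalue `μ`, then the multiplicity
of `μ` as an eigenvalue of `G` equals `ν ⬝ ∑ᵢ ((x i)₁)²`. -/
theorem walkRegular_eigenvalue_multiplicity {V : Type*} [Fintype V]
    (G : SimpleGraph V)
    (hwr : ∀ (r : ℕ) (v w : V), (G.adjMatrix ℕ ^ r) v v = (G.adjMatrix ℕ ^ r) w w)
    (m : ℕ) (C : Fin (m + 1) → Finset V) (Q : Matrix (Fin (m + 1)) (Fin (m + 1)) ℕ)
    (hpart : ∀ v, ∃! i, v ∈ C i) (hne : ∀ i, (C i).Nonempty) (h1 : (C 0).card = 1)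
    (heq : ∀ i j, ∀ v ∈ C i, ((C j).filter (G.Adj v)).card = Q i j)
    (S P : Matrix (Fin (m + 1)) (Fin (m + 1)) ℝ)
    (hS : S = Matrix.diagonal fun i => Real.sqrt ((C i).card))
    (hP : P = S * Q.map (Nat.cast : ℕ → ℝ) * S⁻¹)
    (μ : ℝ) (ℓ : ℕ) (x : Fin ℓ → Fin (m + 1) → ℝ)
    (heig : ∀ i, P.mulVec (x i) = μ • x i)
    (horth : ∀ i j, (∑ t, x i t * x j t) = if i = j then (1 : ℝ) else 0)
    (hspan : ∀ y : Fin (m + 1) → ℝ, P.mulVec y = μ • y →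
      y ∈ Submodule.span ℝ (Set.range x)) :
    (Module.finrank ℝ
        (Module.End.eigenspace (Matrix.toLin' (G.adjMatrix ℝ)) μ) : ℝ) =
      (Fintype.card V) * ∑ i, (x i 0) ^ 2 := by
  set A := G.adjMatrix ℝ
  set B := normalizedCharMatrix C
  have hAB : A * B = B * P := hP ▸ hS ▸ adjMatrix_mul_normalizedCharMatrix G hpart hne heq
  have hBB : Bᵀ * B = 1 := transpose_mul_normalizedCharMatrix hpart hne
  have hA : A.IsHermitian := G.isHermitian_adjMatrix ℝ
  have hPherm : P.IsHermitian :=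
    hA.of_mul_eq_mul (by rwa [conjTranspose_eq_transpose_of_trivial]) hAB
  obtain ⟨p, hpμ, hp⟩ := Polynomial.exists_eval_eq_one_and_eval_eq_zero A.finite_spectrum μ
  have hpP : ∀ θ ∈ spectrum ℝ P, θ ≠ μ → p.eval θ = 0 :=
    fun θ hθ => hp θ (spectrum_subset_of_mul_eq_mul hBB hAB hθ)
  obtain ⟨v₀, hv₀⟩ := Finset.card_eq_one.mp h1
  calc (Module.finrank ℝ (Module.End.eigenspace (toLin' A) μ) : ℝ)
      = trace (aeval A p) := hA.finrank_eigenspace_eq_trace_aeval hpμ hp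
    _ = Fintype.card V * (aeval A p * B) v₀ 0 := by
      rw [trace_aeval_eq_card_mul (SimpleGraph.adjMatrix_pow_apply_self_eq hwr ℝ) p v₀,
        mul_normalizedCharMatrix_apply_of_eq_singleton hv₀]
    _ = Fintype.card V * aeval P p 0 0 := by
      rw [aeval_mul_eq_mul_aeval_s13 hAB, normalizedCharMatrix_mul_apply_of_eq_singleton hpart hv₀]
    _ = Fintype.card V * ∑ i, x i 0 ^ 2 := by
      rw [hPherm.aeval_eq_sum_vecMulVec heig horth hspan hpμ hpP]
      simp [Matrix.sum_apply, vecMulVec_apply, sq]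
end
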